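/- Let M be a length-one ℤ[t]-module of exponent 2ⁿ, let σ be an involution of ℤ[t], and let b : M × M → ℚ[t]/ℤ[t] be a nonsingular σ-sesquilinear linking form on M. Then a submodule N of M has colength one in M (i.e. M/N has length one) if and only if N = X^⊥ for some submodule X of M. -/

import Mathlib

noncomputable instance : Algebra (Polynomial ℤ) (Polynomial ℚ) :=
  (Polynomial.mapRingHom (Int.castRingHom ℚ)).toAlgebra

/-- The `ℤ[t]`-module `ℚ[t]/ℤ[t]`. -/
noncomputable abbrev QtZt : Type :=
  Polynomial ℚ ⧸ LinearMap.range (Algebra.linearMap (Polynomial ℤ) (Polynomial ℚ))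

/-- An `R`-module `M` has *length one*. -/
def IsLengthOne (R M : Type*) [CommRing R] [AddCommGroup M] [Module R M] : Prop :=
  ∃ (k l : ℕ) (f : (Fin k → R) →ₗ[R] (Fin l → R)) (g : (Fin l → R) →ₗ[R] M),
    Function.Injective f ∧ Function.Surjective g ∧ LinearMap.range f = LinearMap.ker g

/-- A nonsingular `σ`-sesquilinear linking form on a `ℤ[t]`-module `M`, with values in
`ℚ[t]/ℤ[t]`.  Here `σ` is an involution of `ℤ[t]` and `τ` is the induced additive
involution `σ̄` of `ℚ[t]/ℤ[t]`.  Nonsingularity is stated as bijectivity of the adjoint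
`x ↦ (y ↦ b x y) : M → M^∧`. -/
structure LinkingForm (σ : Polynomial ℤ ≃+* Polynomial ℤ) (τ : QtZt →+ QtZt)
    (M : Type) [AddCommGroup M] [Module (Polynomial ℤ) M] where
  b : M → M → QtZt
  add_left : ∀ x x' y, b (x + x') y = b x y + b x' y
  add_right : ∀ x y y', b x (y + y') = b x y + b x y'
  smul_right : ∀ (p : Polynomial ℤ) (x y : M), b x (p • y) = p • b x y
  smul_left : ∀ (p : Polynomial ℤ) (x y : M), b (p • x) y = σ p • b x y
  symm : ∀ x y, b x y = τ (b y x)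
  nondegen : ∀ x, (∀ y, b x y = 0) → x = 0
  adj_surj : ∀ φ : M →ₗ[Polynomial ℤ] QtZt, ∃ x, ∀ y, b x y = φ y

namespace LinkingForm

variable {σ : Polynomial ℤ ≃+* Polynomial ℤ} {τ : QtZt →+ QtZt}
  {M : Type} [AddCommGroup M] [Module (Polynomial ℤ) M]

lemma b_zero_left (L : LinkingForm σ τ M) (y : M) : L.b 0 y = 0 := by
  have h := L.add_left 0 0 y
  rw [add_zero] at h
  exact (left_eq_add.mp h)

/-- The orthogonal complement `X^⊥ = {y ∈ M : b(y,x) = 0 for all x ∈ X}`. -/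
def perp (L : LinkingForm σ τ M) (X : Submodule (Polynomial ℤ) M) :
    Submodule (Polynomial ℤ) M where
  carrier := {y | ∀ x ∈ X, L.b y x = 0}
  zero_mem' := fun x _ => L.b_zero_left x
  add_mem' := by
    intro a b ha hb x hx
    rw [L.add_left, ha x hx, hb x hx, add_zero]
  smul_mem' := by
    intro r a ha x hx
    rw [L.smul_left, ha x hx, smul_zero]

end LinkingForm

/-!
For `N = X^⊥` with `X` spanned by `x₁, …, x_r`, `N` is the kernel of the linear map
`y ↦ (b(xᵢ, y))ᵢ` to `(ℚ[t]/ℤ[t])^r`, which is killed by `2ⁿ`. On a free cover `ℤ[t]^l ↠ M` every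
such map has the form `c ↦ (h c)/2ⁿ` for a matrix `h`, so `M/N ≅ ℤ[t]^l / h⁻¹(2ⁿ ℤ[t]^r)`.
Peeling off one power of `2` and one coordinate at a time, the successive subquotients are
submodules of `ℤ[t]/2 ≅ 𝔽₂[t]`, a principal ideal domain, hence `0` or `ℤ[t]/2`; the horseshoe
lemma assembles them into a length-one resolution.

Conversely, dividing a length-one resolution of `M/N` by `2ⁿ` shows that maps `M/N → ℚ[t]/ℤ[t]`
separate points; nonsingularity turns each such map into an element of `N^⊥`, so `N = (N^⊥)^⊥`.
-/

open scoped Polynomial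

namespace IsLengthOne

variable {R : Type*} [CommRing R] {V W : Type*} [AddCommGroup V] [Module R V]
  [AddCommGroup W] [Module R W]

theorem finite (h : IsLengthOne R V) : Module.Finite R V := by
  obtain ⟨k, l, f, g, -, hg, -⟩ := h
  exact Module.Finite.of_surjective g hg

theorem of_linearEquiv (e : V ≃ₗ[R] W) (h : IsLengthOne R V) : IsLengthOne R W := by
  obtain ⟨k, l, f, g, hf, hg, hfg⟩ := h
  refine ⟨k, l, f, e.toLinearMap ∘ₗ g, hf, e.surjective.comp hg, ?_⟩
  rw [LinearMap.ker_comp, LinearEquiv.ker, Submodule.comap_bot, hfg]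

theorem of_subsingleton [Subsingleton V] : IsLengthOne R V :=
  ⟨0, 0, LinearMap.id, 0, Function.injective_id, fun _ => ⟨0, Subsingleton.elim _ _⟩, by
    rw [LinearMap.range_id, LinearMap.ker_zero]⟩

theorem of_free {F₁ F₀ : Type*} [AddCommGroup F₁] [Module R F₁] [Module.Free R F₁]
    [Module.Finite R F₁] [AddCommGroup F₀] [Module R F₀] [Module.Free R F₀] [Module.Finite R F₀]
    (f : F₁ →ₗ[R] F₀) (g : F₀ →ₗ[R] V) (hf : Function.Injective f)
    (hg : Function.Surjective g) (hfg : LinearMap.range f = LinearMap.ker g) :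
    IsLengthOne R V := by
  let e₁ := (Module.Free.chooseBasis R F₁).equivFun ≪≫ₗ
    LinearEquiv.funCongrLeft R R (Fintype.equivFin _).symm
  let e₀ := (Module.Free.chooseBasis R F₀).equivFun ≪≫ₗ
    LinearEquiv.funCongrLeft R R (Fintype.equivFin _).symm
  refine ⟨_, _, e₀.toLinearMap ∘ₗ f ∘ₗ e₁.symm.toLinearMap, g ∘ₗ e₀.symm.toLinearMap,
    e₀.injective.comp (hf.comp e₁.symm.injective), hg.comp e₀.symm.surjective, ?_⟩
  rw [LinearMap.ker_comp, ← hfg, LinearMap.range_comp, LinearMap.range_comp,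
    LinearEquiv.range, Submodule.map_top, Submodule.map_equiv_eq_comap_symm]

-- the horseshoe lemma
theorem of_extension (K : Submodule R V) (h₁ : IsLengthOne R K) (h₂ : IsLengthOne R (V ⧸ K)) :
    IsLengthOne R V := by
  obtain ⟨k₁, l₁, f₁, g₁, hf₁, hg₁, hfg₁⟩ := h₁
  obtain ⟨k₂, l₂, f₂, g₂, hf₂, hg₂, hfg₂⟩ := h₂
  obtain ⟨s, hs⟩ := Module.projective_lifting_property K.mkQ g₂ K.mkQ_surjective
  have hsf₂ : ∀ c, s (f₂ c) ∈ K := fun c => by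
    rw [← Submodule.Quotient.mk_eq_zero, ← Submodule.mkQ_apply, ← LinearMap.comp_apply, hs,
      ← LinearMap.mem_ker, ← hfg₂]
    exact LinearMap.mem_range_self f₂ c
  obtain ⟨e, he⟩ :=
    Module.projective_lifting_property g₁ ((s ∘ₗ f₂).codRestrict K hsf₂) hg₁
  have hge : ∀ c, (g₁ (e c) : V) = s (f₂ c) := fun c =>
    congrArg Subtype.val (LinearMap.congr_fun he c)
  have hgs : ∀ w, K.mkQ (s w) = g₂ w := LinearMap.congr_fun hs
  let f := (f₁ ∘ₗ LinearMap.fst R _ _ - e ∘ₗ LinearMap.snd R _ _).prod (f₂ ∘ₗ LinearMap.snd R _ _)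
  let g := (K.subtype ∘ₗ g₁).coprod s
  refine of_free f g ?_ ?_ ?_
  · refine (injective_iff_map_eq_zero f).mpr fun ⟨a, c⟩ h => ?_
    obtain ⟨h₁, h₂⟩ := Prod.ext_iff.mp h
    have hc : c = 0 := hf₂ (by simpa [f] using h₂)
    have ha : a = 0 := hf₁ (by simpa [f, hc] using h₁)
    simp [ha, hc]
  · intro v
    obtain ⟨w, hw⟩ := hg₂ (K.mkQ v)
    have hvw : v - s w ∈ K := by
      rw [← Submodule.Quotient.mk_eq_zero, Submodule.Quotient.mk_sub, ← Submodule.mkQ_apply,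
        ← Submodule.mkQ_apply, hgs, hw, sub_self]
    obtain ⟨u, hu⟩ := hg₁ ⟨v - s w, hvw⟩
    exact ⟨(u, w), by simp [g, hu]⟩
  · refine le_antisymm ?_ fun ⟨u, w⟩ huw => ?_
    · rintro _ ⟨⟨a, c⟩, rfl⟩
      have ha : g₁ (f₁ a) = 0 := by rw [← LinearMap.mem_ker, ← hfg₁]; exact ⟨a, rfl⟩
      simp [f, g, ha, hge]
    · have huw' : (g₁ u : V) + s w = 0 := huw
      have hw : w ∈ LinearMap.range f₂ := by
        rw [hfg₂, LinearMap.mem_ker, ← hgs, Submodule.mkQ_apply, eq_neg_of_add_eq_zero_right huw',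
          Submodule.Quotient.mk_neg, (Submodule.Quotient.mk_eq_zero K).mpr (g₁ u).2, neg_zero]
      obtain ⟨c, rfl⟩ := hw
      have hu : u + e c ∈ LinearMap.range f₁ := by
        rw [hfg₁, LinearMap.mem_ker, map_add, ← Subtype.coe_inj, Submodule.coe_add, hge, huw',
          Submodule.coe_zero]
      obtain ⟨a, ha⟩ := hu
      exact ⟨(a, c), by simp [f, ha]⟩

theorem quotient_of_le {P P₂ : Submodule R V} (hle : P ≤ P₂) {l : ℕ} (q : (Fin l → R) →ₗ[R] V)
    (hq : LinearMap.range q = P₂) (h₁ : IsLengthOne R ((Fin l → R) ⧸ P.comap q))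
    (h₂ : IsLengthOne R (V ⧸ P₂)) : IsLengthOne R (V ⧸ P) := by
  have hker : LinearMap.ker (P.mkQ ∘ₗ q) = P.comap q := by
    rw [LinearMap.ker_comp, Submodule.ker_mkQ]
  have hrange : LinearMap.range (P.mkQ ∘ₗ q) = P₂.map P.mkQ := by
    rw [LinearMap.range_comp, hq]
  refine of_extension (P₂.map P.mkQ) ?_
    (of_linearEquiv (Submodule.quotientQuotientEquivQuotient P P₂ hle).symm h₂)
  exact of_linearEquiv (Submodule.quotEquivOfEq _ _ hker.symm ≪≫ₗ
    (P.mkQ ∘ₗ q).quotKerEquivRange ≪≫ₗ LinearEquiv.ofEq _ _ hrange) h₁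

theorem quotient_span_singleton [IsDomain R] {a : R} (ha : a ≠ 0) :
    IsLengthOne R (R ⧸ Ideal.span {a}) :=
  of_free (LinearMap.mulLeft R a) (Ideal.span {a}).mkQ (mul_right_injective₀ ha)
    (Submodule.mkQ_surjective _) (by
      ext x
      simp [Ideal.mem_span_singleton, Dvd.dvd, eq_comm])

end IsLengthOne

theorem LinearMap.exists_eq_smul_of_forall_eq_smul {R P W : Type*} [CommRing R] [AddCommGroup P]
    [Module R P] [Module.Projective R P] [AddCommGroup W] [Module R W] (a : R)
    (h : P →ₗ[R] W) (ha : ∀ x, ∃ y, h x = a • y) : ∃ h' : P →ₗ[R] W, h = a • h' := by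
  let m : W →ₗ[R] W := a • LinearMap.id
  obtain ⟨h', hh'⟩ := Module.projective_lifting_property m.rangeRestrict
    (h.codRestrict (LinearMap.range m) fun x => (ha x).imp fun y hy => hy.symm)
    m.surjective_rangeRestrict
  exact ⟨h', LinearMap.ext fun x => (congrArg Subtype.val (LinearMap.congr_fun hh' x)).symm⟩

def Submodule.piSpanSingleton {R ι : Type*} [CommSemiring R] (a : R) : Submodule R (ι → R) :=
  Submodule.pi Set.univ fun _ => Ideal.span {a}

theorem Submodule.mem_piSpanSingleton {R ι : Type*} [CommSemiring R] {a : R} {v : ι → R} :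
    v ∈ Submodule.piSpanSingleton a ↔ ∀ i, a ∣ v i := by
  simp [Submodule.piSpanSingleton, Submodule.mem_pi, Ideal.mem_span_singleton]

namespace Polynomial.Int

variable (p : ℕ) [hp : Fact p.Prime]

theorem prime_natCast : Prime (p : ℤ[X]) := by
  rw [← map_natCast Polynomial.C]
  exact Polynomial.prime_C_iff.mpr (Nat.prime_iff_prime_int.mp hp.out)

/-- Reduction modulo `p` identifies `ℤ[X] ⧸ (p)` with the principal ideal ring `(ZMod p)[X]`. -/
theorem isPrincipal_submodule_quotient_span
    (S : Submodule ℤ[X] (ℤ[X] ⧸ Ideal.span {(p : ℤ[X])})) : S.IsPrincipal := by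
  let r := Polynomial.mapRingHom (Int.castRingHom (ZMod p))
  have hr : Function.Surjective r := Polynomial.map_surjective _ ZMod.intCast_surjective
  have hker : RingHom.ker r = Ideal.span {(p : ℤ[X])} := by
    rw [Polynomial.ker_mapRingHom, ZMod.ker_intCastRingHom, Ideal.map_span, Set.image_singleton,
      map_natCast]
  let J : Ideal ℤ[X] := S.comap (Ideal.span {(p : ℤ[X])}).mkQ
  obtain ⟨g', hg'⟩ := (IsPrincipalIdealRing.principal (J.map r)).principal
  obtain ⟨g, hgJ, rfl⟩ := (Ideal.mem_map_iff_of_surjective r hr).mp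
    (hg' ▸ Submodule.mem_span_singleton_self g')
  refine ⟨⟨Submodule.Quotient.mk g, le_antisymm (fun x hx => ?_) ?_⟩⟩
  · obtain ⟨f, rfl⟩ := Submodule.Quotient.mk_surjective _ x
    have hf : r f ∈ J.map r := Ideal.mem_map_of_mem r hx
    obtain ⟨c', hc'⟩ := Submodule.mem_span_singleton.mp (hg' ▸ hf)
    obtain ⟨c, rfl⟩ := hr c'
    have hfc : f - c * g ∈ Ideal.span {(p : ℤ[X])} := by
      rw [← hker, RingHom.mem_ker, map_sub, map_mul, ← smul_eq_mul, hc', sub_self]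
    refine Submodule.mem_span_singleton.mpr ⟨c, ?_⟩
    rw [← Submodule.Quotient.mk_smul, smul_eq_mul, eq_comm, ← sub_eq_zero,
      ← Submodule.Quotient.mk_sub, Submodule.Quotient.mk_eq_zero]
    exact hfc
  · exact (Submodule.span_singleton_le_iff_mem _ _).mpr hgJ

theorem isLengthOne_submodule_quotient_span
    (S : Submodule ℤ[X] (ℤ[X] ⧸ Ideal.span {(p : ℤ[X])})) : IsLengthOne ℤ[X] S := by
  obtain ⟨x, rfl⟩ := (isPrincipal_submodule_quotient_span p S).principal
  obtain ⟨g, rfl⟩ := Submodule.Quotient.mk_surjective _ x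
  by_cases hg : (p : ℤ[X]) ∣ g
  · have : Subsingleton (Submodule.span ℤ[X]
        {(Submodule.Quotient.mk g : ℤ[X] ⧸ Ideal.span {(p : ℤ[X])})}) := by
      rw [(Submodule.Quotient.mk_eq_zero _).mpr (Ideal.mem_span_singleton.mpr hg),
        Submodule.span_singleton_eq_bot.mpr rfl]
      infer_instance
    exact IsLengthOne.of_subsingleton
  · have htors : Ideal.torsionOf ℤ[X] _
        (Submodule.Quotient.mk g : ℤ[X] ⧸ Ideal.span {(p : ℤ[X])}) = Ideal.span {(p : ℤ[X])} := by
      ext a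
      rw [Ideal.mem_torsionOf_iff, ← Submodule.Quotient.mk_smul, Submodule.Quotient.mk_eq_zero,
        Ideal.mem_span_singleton, Ideal.mem_span_singleton, smul_eq_mul]
      exact ⟨fun h => ((prime_natCast p).dvd_or_dvd h).resolve_right hg,
        fun h => dvd_mul_of_dvd_left h g⟩
    refine IsLengthOne.of_linearEquiv (Ideal.quotTorsionOfEquivSpanSingleton ℤ[X] _ _) ?_
    rw [htors]
    exact IsLengthOne.quotient_span_singleton (prime_natCast p).ne_zero

theorem isLengthOne_quotient_comap_span {V : Type*} [AddCommGroup V] [Module ℤ[X] V]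
    (φ : V →ₗ[ℤ[X]] ℤ[X]) :
    IsLengthOne ℤ[X] (V ⧸ Submodule.comap φ (Ideal.span {(p : ℤ[X])})) := by
  have hker : LinearMap.ker ((Ideal.span {(p : ℤ[X])}).mkQ ∘ₗ φ) =
      Submodule.comap φ (Ideal.span {(p : ℤ[X])}) := by
    rw [LinearMap.ker_comp, Submodule.ker_mkQ]
  exact IsLengthOne.of_linearEquiv (Submodule.quotEquivOfEq _ _ hker.symm ≪≫ₗ
    LinearMap.quotKerEquivRange _).symm (isLengthOne_submodule_quotient_span p _)

theorem isLengthOne_quotient_comap_pi_span {r l : ℕ}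
    (h : (Fin l → ℤ[X]) →ₗ[ℤ[X]] (Fin r → ℤ[X])) :
    IsLengthOne ℤ[X] ((Fin l → ℤ[X]) ⧸
      Submodule.comap h (Submodule.piSpanSingleton (p : ℤ[X]))) := by
  induction r generalizing l with
  | zero =>
    have htop : Submodule.comap h (Submodule.piSpanSingleton (p : ℤ[X])) = ⊤ :=
      eq_top_iff.mpr fun u _ => Submodule.mem_piSpanSingleton.mpr finZeroElim
    have := Submodule.Quotient.subsingleton_iff.mpr htop
    exact IsLengthOne.of_subsingleton
  | succ r ih =>
    let P₁ := Submodule.comap (LinearMap.proj (Fin.last r) ∘ₗ h) (Ideal.span {(p : ℤ[X])})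
    obtain ⟨l', q, hq⟩ :=
      (Submodule.fg_iff_exists_fin_linearMap _ _).mp (IsNoetherian.noetherian P₁)
    have hle : Submodule.comap h (Submodule.piSpanSingleton (p : ℤ[X])) ≤ P₁ :=
      fun u hu => Ideal.mem_span_singleton.mpr (Submodule.mem_piSpanSingleton.mp hu (Fin.last r))
    let init : (Fin (r + 1) → ℤ[X]) →ₗ[ℤ[X]] (Fin r → ℤ[X]) :=
      LinearMap.pi fun i => LinearMap.proj i.castSucc
    have hker : Submodule.comap q (Submodule.comap h
          (Submodule.piSpanSingleton (p : ℤ[X]))) =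
        Submodule.comap (init ∘ₗ h ∘ₗ q) (Submodule.piSpanSingleton (p : ℤ[X])) := by
      ext a
      have hlast : q a ∈ P₁ := hq ▸ LinearMap.mem_range_self q a
      simp only [Submodule.mem_comap, Submodule.mem_piSpanSingleton, Fin.forall_fin_succ']
      simp only [P₁, Submodule.mem_comap, Ideal.mem_span_singleton, LinearMap.comp_apply,
        LinearMap.proj_apply] at hlast
      simp [init, hlast]
    refine IsLengthOne.quotient_of_le hle q hq ?_ (isLengthOne_quotient_comap_span p _)
    rw [hker]
    exact ih _

theorem isLengthOne_quotient_comap_pi_span_pow (n : ℕ) {r l : ℕ}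
    (h : (Fin l → ℤ[X]) →ₗ[ℤ[X]] (Fin r → ℤ[X])) :
    IsLengthOne ℤ[X] ((Fin l → ℤ[X]) ⧸
      Submodule.comap h (Submodule.piSpanSingleton ((p : ℤ[X]) ^ n))) := by
  induction n generalizing l with
  | zero =>
    have htop : Submodule.comap h (Submodule.piSpanSingleton ((p : ℤ[X]) ^ 0)) = ⊤ :=
      eq_top_iff.mpr fun u _ => Submodule.mem_piSpanSingleton.mpr fun i => by simp
    have := Submodule.Quotient.subsingleton_iff.mpr htop
    exact IsLengthOne.of_subsingleton
  | succ n ih =>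
    let P₂ := Submodule.comap h (Submodule.piSpanSingleton (p : ℤ[X]))
    obtain ⟨l', q, hq⟩ :=
      (Submodule.fg_iff_exists_fin_linearMap _ _).mp (IsNoetherian.noetherian P₂)
    have hle : Submodule.comap h (Submodule.piSpanSingleton ((p : ℤ[X]) ^ (n + 1)))
        ≤ P₂ := fun u hu => Submodule.mem_piSpanSingleton.mpr fun i =>
      (dvd_pow_self _ n.succ_ne_zero).trans (Submodule.mem_piSpanSingleton.mp hu i)
    obtain ⟨h', hh'⟩ := (h ∘ₗ q).exists_eq_smul_of_forall_eq_smul (p : ℤ[X])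
        fun x : Fin l' → ℤ[X] => by
      have hx : ∀ i, (p : ℤ[X]) ∣ h (q x) i :=
        Submodule.mem_piSpanSingleton.mp (hq ▸ LinearMap.mem_range_self q x : q x ∈ P₂)
      exact ⟨fun i => (hx i).choose, _root_.funext fun i => (hx i).choose_spec⟩
    have hker : Submodule.comap q (Submodule.comap h
          (Submodule.piSpanSingleton ((p : ℤ[X]) ^ (n + 1)))) =
        Submodule.comap h' (Submodule.piSpanSingleton ((p : ℤ[X]) ^ n)) := by
      ext a
      have hha : ∀ i, h (q a) i = p * h' a i := fun i => congrFun (LinearMap.congr_fun hh' a) i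
      simp only [Submodule.mem_comap, Submodule.mem_piSpanSingleton, hha, pow_succ',
        mul_dvd_mul_iff_left (prime_natCast p).ne_zero]
    refine IsLengthOne.quotient_of_le hle q hq ?_ (isLengthOne_quotient_comap_pi_span p h)
    rw [hker]
    exact ih _

end Polynomial.Int

theorem LinearMap.exists_comp_eq_smul_id {R F₁ F₀ : Type*} [CommRing R] [AddCommGroup F₁]
    [Module R F₁] [AddCommGroup F₀] [Module R F₀] [Module.Projective R F₀] {f : F₁ →ₗ[R] F₀}
    (hf : Function.Injective f) (a : R) (ha : ∀ y, a • y ∈ LinearMap.range f) :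
    ∃ B : F₀ →ₗ[R] F₁, f ∘ₗ B = a • LinearMap.id ∧ B ∘ₗ f = a • LinearMap.id := by
  let B := (LinearEquiv.ofInjective f hf).symm.toLinearMap ∘ₗ
    (a • LinearMap.id).codRestrict (LinearMap.range f) ha
  have hfB : f ∘ₗ B = a • LinearMap.id := LinearMap.ext fun y => by simp [B]
  refine ⟨B, hfB, LinearMap.ext fun x => hf ?_⟩
  simpa using LinearMap.congr_fun hfB (f x)

namespace QtZt

noncomputable def divNat (d : ℕ) : ℤ[X] →ₗ[ℤ[X]] QtZt :=
  Submodule.mkQ _ ∘ₗ LinearMap.mulLeft ℤ[X] (Polynomial.C (d : ℚ)⁻¹) ∘ₗ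
    Algebra.linearMap ℤ[X] ℚ[X]

variable {d : ℕ}

theorem natCast_smul_C_inv_mul (hd : d ≠ 0) (y : ℚ[X]) :
    (d : ℤ[X]) • (Polynomial.C (d : ℚ)⁻¹ * y) = y := by
  rw [Algebra.smul_def, map_natCast, ← mul_assoc, ← Polynomial.C_eq_natCast, ← Polynomial.C_mul,
    mul_inv_cancel₀ (Nat.cast_ne_zero.mpr hd), Polynomial.C_1, one_mul]

theorem C_inv_mul_natCast_smul (hd : d ≠ 0) (y : ℚ[X]) :
    Polynomial.C (d : ℚ)⁻¹ * ((d : ℤ[X]) • y) = y := by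
  rw [Algebra.smul_def, map_natCast, ← mul_assoc, ← Polynomial.C_eq_natCast, ← Polynomial.C_mul,
    inv_mul_cancel₀ (Nat.cast_ne_zero.mpr hd), Polynomial.C_1, one_mul]

theorem algebraMap_injective : Function.Injective (algebraMap ℤ[X] ℚ[X]) :=
  Polynomial.map_injective _ Int.cast_injective

theorem ker_divNat (hd : d ≠ 0) : LinearMap.ker (divNat d) = Ideal.span {(d : ℤ[X])} := by
  ext c
  simp only [divNat, LinearMap.mem_ker, LinearMap.comp_apply, Submodule.mkQ_apply,
    Submodule.Quotient.mk_eq_zero, LinearMap.mem_range, Ideal.mem_span_singleton,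
    Algebra.linearMap_apply, LinearMap.mulLeft_apply]
  constructor
  · rintro ⟨e, he⟩
    refine ⟨e, algebraMap_injective ?_⟩
    rw [map_mul, ← Algebra.smul_def, he, natCast_smul_C_inv_mul hd]
  · rintro ⟨e, rfl⟩
    refine ⟨e, ?_⟩
    rw [map_mul, ← Algebra.smul_def, C_inv_mul_natCast_smul hd]

theorem range_divNat (hd : d ≠ 0) :
    LinearMap.range (divNat d) = Submodule.torsionBy ℤ[X] QtZt (d : ℤ[X]) := by
  refine le_antisymm ?_ fun z hz => ?_
  · rintro _ ⟨c, rfl⟩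
    rw [Submodule.mem_torsionBy_iff, ← map_smul, ← LinearMap.mem_ker, ker_divNat hd]
    exact Ideal.mem_span_singleton.mpr (dvd_mul_right _ c)
  · obtain ⟨y, rfl⟩ := Submodule.Quotient.mk_surjective _ z
    rw [Submodule.mem_torsionBy_iff, ← Submodule.Quotient.mk_smul,
      Submodule.Quotient.mk_eq_zero] at hz
    obtain ⟨c, hc⟩ := hz
    refine ⟨c, ?_⟩
    simp only [divNat, LinearMap.comp_apply, Algebra.linearMap_apply, LinearMap.mulLeft_apply,
      Submodule.mkQ_apply]
    rw [← Algebra.linearMap_apply, hc, C_inv_mul_natCast_smul hd]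

theorem exists_divNat_comp_eq {P : Type*} [AddCommGroup P] [Module ℤ[X] P]
    [Module.Projective ℤ[X] P] (hd : d ≠ 0) (ψ : P →ₗ[ℤ[X]] QtZt)
    (hψ : ∀ x, (d : ℤ[X]) • ψ x = 0) : ∃ h : P →ₗ[ℤ[X]] ℤ[X], divNat d ∘ₗ h = ψ := by
  obtain ⟨h, hh⟩ := Module.projective_lifting_property (divNat d).rangeRestrict
    (ψ.codRestrict _ fun x => (range_divNat hd).ge (hψ x)) (divNat d).surjective_rangeRestrict
  exact ⟨h, LinearMap.ext fun x => congrArg Subtype.val (LinearMap.congr_fun hh x)⟩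

theorem exists_apply_ne_zero {V : Type*} [AddCommGroup V] [Module ℤ[X] V]
    (hV : IsLengthOne ℤ[X] V) (hd : d ≠ 0) (hexp : ∀ v : V, (d : ℤ[X]) • v = 0) {v : V}
    (hv : v ≠ 0) : ∃ φ : V →ₗ[ℤ[X]] QtZt, φ v ≠ 0 := by
  obtain ⟨k, l, f, g, hf, hg, hfg⟩ := hV
  obtain ⟨B, hfB, hBf⟩ := LinearMap.exists_comp_eq_smul_id hf (d : ℤ[X]) fun y => by
    rw [hfg, LinearMap.mem_ker, map_smul, hexp]
  obtain ⟨u, rfl⟩ := hg v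
  have hd' : (d : ℤ[X]) ≠ 0 := Nat.cast_ne_zero.mpr hd
  -- as `f ∘ B = d`, `u ∈ range f` iff `d` divides every coordinate of `B u`
  obtain ⟨i, hi⟩ : ∃ i, ¬ (d : ℤ[X]) ∣ B u i := by
    by_contra! hdvd
    choose c hc using hdvd
    refine hv (LinearMap.mem_ker.mp (hfg ▸ ⟨c, smul_right_injective _ hd' ?_⟩))
    change (d : ℤ[X]) • f c = (d : ℤ[X]) • u
    rw [← map_smul, show (d : ℤ[X]) • c = B u from funext fun i => (hc i).symm]
    exact LinearMap.congr_fun hfB u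
  let φ₀ := divNat d ∘ₗ LinearMap.proj i ∘ₗ B
  have hφ₀ : LinearMap.ker g ≤ LinearMap.ker φ₀ := by
    rintro _ hx
    obtain ⟨y, rfl⟩ := hfg.ge hx
    rw [LinearMap.mem_ker]
    simp [φ₀, ← LinearMap.comp_apply B f, hBf, ← LinearMap.mem_ker, ker_divNat hd,
      Ideal.mem_span_singleton]
  refine ⟨(LinearMap.ker g).liftQ φ₀ hφ₀ ∘ₗ (g.quotKerEquivOfSurjective hg).symm.toLinearMap, ?_⟩
  rw [LinearMap.comp_apply, LinearEquiv.coe_toLinearMap,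
    show (g.quotKerEquivOfSurjective hg).symm (g u) = Submodule.Quotient.mk u from
      (LinearEquiv.symm_apply_eq _).mpr rfl, Submodule.liftQ_apply]
  change divNat d (B u i) ≠ 0
  rwa [Ne, ← LinearMap.mem_ker, ker_divNat hd, Ideal.mem_span_singleton]

theorem isLengthOne_quotient_ker {V : Type*} [AddCommGroup V] [Module ℤ[X] V]
    [Module.Finite ℤ[X] V] (p n : ℕ) [Fact p.Prime] {r : ℕ} (Ψ : V →ₗ[ℤ[X]] (Fin r → QtZt))
    (hΨ : ∀ v, (p : ℤ[X]) ^ n • Ψ v = 0) : IsLengthOne ℤ[X] (V ⧸ LinearMap.ker Ψ) := by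
  obtain ⟨l, g, hg⟩ := Module.Finite.exists_fin' ℤ[X] V
  have hd : p ^ n ≠ 0 := pow_ne_zero n (Fact.out : p.Prime).ne_zero
  have hlift : ∀ i, ∃ h : (Fin l → ℤ[X]) →ₗ[ℤ[X]] ℤ[X],
      divNat (p ^ n) ∘ₗ h = LinearMap.proj i ∘ₗ Ψ ∘ₗ g := fun i =>
    exists_divNat_comp_eq hd _ fun u => by simpa using congrFun (hΨ (g u)) i
  choose h hh using hlift
  have hker : LinearMap.ker ((LinearMap.ker Ψ).mkQ ∘ₗ g) = Submodule.comap (LinearMap.pi h)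
      (Submodule.piSpanSingleton ((p : ℤ[X]) ^ n)) := by
    ext u
    simp only [LinearMap.ker_comp, Submodule.ker_mkQ, Submodule.mem_comap, LinearMap.mem_ker,
      Submodule.mem_piSpanSingleton, LinearMap.pi_apply, funext_iff, Pi.zero_apply]
    refine forall_congr' fun i => ?_
    have hhi : divNat (p ^ n) (h i u) = Ψ (g u) i := LinearMap.congr_fun (hh i) u
    rw [← hhi, ← LinearMap.mem_ker, ker_divNat hd, Ideal.mem_span_singleton, Nat.cast_pow]
  refine IsLengthOne.of_linearEquiv
    (((LinearMap.ker Ψ).mkQ ∘ₗ g).quotKerEquivOfSurjective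
      ((LinearMap.ker Ψ).mkQ_surjective.comp hg)) ?_
  rw [hker]
  exact Polynomial.Int.isLengthOne_quotient_comap_pi_span_pow p n _

end QtZt

namespace LinkingForm

variable {σ : ℤ[X] ≃+* ℤ[X]} {τ : QtZt →+ QtZt}
  {M : Type} [AddCommGroup M] [Module ℤ[X] M] (L : LinkingForm σ τ M)

def linearMapRight (x : M) : M →ₗ[ℤ[X]] QtZt where
  toFun := L.b x
  map_add' := L.add_right x
  map_smul' p y := L.smul_right p x y

theorem b_eq_zero_comm (x y : M) : L.b x y = 0 ↔ L.b y x = 0 :=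
  ⟨fun h => by rw [L.symm, h, map_zero], fun h => by rw [L.symm, h, map_zero]⟩

theorem perp_span_eq_ker {r : ℕ} (x : Fin r → M) :
    L.perp (Submodule.span ℤ[X] (Set.range x)) =
      LinearMap.ker (LinearMap.pi fun i => L.linearMapRight (x i)) := by
  ext y
  change Submodule.span _ (Set.range x) ≤ LinearMap.ker (L.linearMapRight y) ↔ _
  simp only [Submodule.span_le, Set.range_subset_iff, SetLike.mem_coe, LinearMap.mem_ker,
    funext_iff, LinearMap.pi_apply, Pi.zero_apply]
  exact forall_congr' fun i => L.b_eq_zero_comm y (x i)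

theorem perp_perp_eq {N : Submodule ℤ[X] M}
    (hN : ∀ z ∉ N, ∃ φ : M ⧸ N →ₗ[ℤ[X]] QtZt, φ (N.mkQ z) ≠ 0) :
    L.perp (L.perp N) = N := by
  refine le_antisymm (fun z hz => ?_) fun x hx y hy => (L.b_eq_zero_comm x y).mpr (hy x hx)
  by_contra hzN
  obtain ⟨φ, hφ⟩ := hN z hzN
  obtain ⟨y, hy⟩ := L.adj_surj (φ ∘ₗ N.mkQ)
  have hyN : y ∈ L.perp N := fun x hx => by
    rw [hy, LinearMap.comp_apply, Submodule.mkQ_apply, (Submodule.Quotient.mk_eq_zero N).mpr hx,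
      map_zero]
  exact hφ (hy z ▸ (L.b_eq_zero_comm z y).mp (hz y hyN))

end LinkingForm

theorem colengthOne_iff_perp
    (M : Type) [AddCommGroup M] [Module (Polynomial ℤ) M]
    (n : ℕ) (hM : IsLengthOne (Polynomial ℤ) M)
    (hexp : ∀ x : M, (2 : Polynomial ℤ) ^ n • x = 0)
    (σ : Polynomial ℤ ≃+* Polynomial ℤ)
    (τ : QtZt →+ QtZt)
    (L : LinkingForm σ τ M)
    (N : Submodule (Polynomial ℤ) M) :
    IsLengthOne (Polynomial ℤ) (M ⧸ N) ↔
      ∃ X : Submodule (Polynomial ℤ) M, N = L.perp X := by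
  constructor
  · intro hN
    refine ⟨L.perp N, (L.perp_perp_eq fun z hz => ?_).symm⟩
    have hexpN : ∀ v : M ⧸ N, ((2 ^ n : ℕ) : Polynomial ℤ) • v = 0 := by
      intro v
      obtain ⟨x, rfl⟩ := N.mkQ_surjective v
      rw [Nat.cast_pow, Nat.cast_ofNat, ← map_smul, hexp, map_zero]
    exact QtZt.exists_apply_ne_zero hN (pow_ne_zero n two_ne_zero) hexpN
      (by rwa [Submodule.mkQ_apply, Ne, Submodule.Quotient.mk_eq_zero])
  · rintro ⟨X, rfl⟩
    have := hM.finite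
    obtain ⟨r, x, rfl⟩ := Submodule.fg_iff_exists_fin_generating_family.mp
      (IsNoetherian.noetherian X)
    rw [L.perp_span_eq_ker]
    refine QtZt.isLengthOne_quotient_ker 2 n _ fun y => funext fun i => ?_
    change ((2 : ℕ) : Polynomial ℤ) ^ n • L.linearMapRight (x i) y = 0
    rw [Nat.cast_ofNat, ← map_smul, hexp, map_zero]
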